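/- arXiv:1812.02955 — 3 statements merged into one kernel-verified Lean document; each statement's English description precedes it below -/
import Mathlib

section
/- For positive integers n, k and integers 1 ≤ s ≤ r, the mixed Stirling numbers of the second kind satisfy the convolution identity (r choose s) · S(n,k,r) = Σ_{j=0}^{n} (n choose j) · {n−j brace s} · S(j,k,r−s). -/
/-!
Both sides count surjections. Labelling the `r` free blocks of a mixed partition by `Fin r` shows
that `S(n, m + 1, r) * r!` is the number of surjections from an `n`-set onto `Fin m ⊕ Fin r`
(the fibres over `Fin m` are the `B_i`), and `{n brace s} * s!` is the case `m = 0`. After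
multiplying by `s! (r - s)!`, the identity becomes the count of surjections onto a disjoint union
`X ⊕ Y` with `#Y = s`, sorted by the set of `j` points sent into `X`: `n.choose j` choices of that
set, and then independent surjections on each side.
-/

/-- The Stirling number of the second kind `{n brace k}`: the number of partitions of an
`n`-element set into exactly `k` nonempty blocks. -/
noncomputable def stirling (n k : ℕ) : ℕ :=
  Nat.card {P : Finpartition (Finset.univ : Finset (Fin n)) // P.parts.card = k}

/-- The mixed Stirling number of the second kind `S(n, k, r)`: the number of pairs
`(π, (B_2, …, B_k))` where `B_2, …, B_k` are pairwise disjoint nonempty subsets of `{1, …, n}`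
and `π` is a partition of the complement of their union into exactly `r` nonempty blocks. -/
noncomputable def mixedStirling (n k r : ℕ) : ℕ :=
  Nat.card {x : Σ B : Fin (k - 1) → Finset (Fin n),
      Finpartition ((Finset.univ : Finset (Fin n)) \ Finset.univ.biUnion B) //
    (∀ i, (x.1 i).Nonempty) ∧
    (∀ i j, i ≠ j → Disjoint (x.1 i) (x.1 j)) ∧
    x.2.parts.card = r}

open Finset Function

noncomputable def surjCount (n q : ℕ) : ℕ := Nat.card {f : Fin n → Fin q // Surjective f}

section Surjections

variable {α β γ : Type*}

lemma card_surjective_congr {α' β' : Type*} (ea : α ≃ α') (eb : β ≃ β') :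
    Nat.card {f : α → β // Surjective f} = Nat.card {f : α' → β' // Surjective f} :=
  Nat.card_congr <| (ea.arrowCongr eb).subtypeEquiv fun f => by
    change _ ↔ Surjective (eb ∘ f ∘ ea.symm)
    rw [EquivLike.comp_surjective, EquivLike.surjective_comp]

lemma card_surjective_eq_surjCount [Fintype α] [Fintype β] :
    Nat.card {f : α → β // Surjective f} = surjCount (Fintype.card α) (Fintype.card β) :=
  card_surjective_congr (Fintype.equivFin α) (Fintype.equivFin β)

variable [DecidableEq α] (A : Finset α)

def sumMapCompl (g : A → β) (h : {a // a ∉ A} → γ) : α → β ⊕ γ :=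
  Sum.map g h ∘ (Equiv.sumCompl (· ∈ A)).symm

lemma sumMapCompl_surjective_iff {g : A → β} {h : {a // a ∉ A} → γ} :
    Surjective (sumMapCompl A g h) ↔ Surjective g ∧ Surjective h :=
  (EquivLike.surjective_comp _ _).trans Sum.map_surjective

lemma isLeft_sumMapCompl (g : A → β) (h : {a // a ∉ A} → γ) (a : α) :
    (sumMapCompl A g h a).isLeft ↔ a ∈ A := by
  by_cases ha : a ∈ A <;>
    simp [sumMapCompl, ha, Equiv.sumCompl_symm_apply_of_pos, Equiv.sumCompl_symm_apply_of_neg]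

lemma sumMapCompl_injective :
    Injective fun gh : (A → β) × ({a // a ∉ A} → γ) => sumMapCompl A gh.1 gh.2 := by
  rintro ⟨g, h⟩ ⟨g', h'⟩ hgh
  have hmap : Sum.map g h = Sum.map g' h' :=
    (Equiv.sumCompl (· ∈ A)).symm.surjective.injective_comp_right hgh
  refine Prod.ext (funext fun a => ?_) (funext fun a => ?_)
  · simpa using congrFun hmap (Sum.inl a)
  · simpa using congrFun hmap (Sum.inr a)

lemma card_surjective_sum_filter_isLeft [Fintype α] [Fintype β] [Fintype γ] :
    Nat.card {F : {f : α → β ⊕ γ // Surjective f} //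
        ({a | (F.1 a).isLeft} : Finset α) = A} =
      surjCount #A (Fintype.card β) * surjCount (Fintype.card α - #A) (Fintype.card γ) := by
  let glue (gh : {g : A → β // Surjective g} × {h : {a // a ∉ A} → γ // Surjective h}) :
      {F : {f : α → β ⊕ γ // Surjective f} // ({a | (F.1 a).isLeft} : Finset α) = A} :=
    ⟨⟨sumMapCompl A gh.1.1 gh.2.1, (sumMapCompl_surjective_iff A).2 ⟨gh.1.2, gh.2.2⟩⟩,
      by ext a; simp [isLeft_sumMapCompl]⟩
  have hglue : Bijective glue := by
    refine ⟨fun gh gh' h => ?_, fun F => ?_⟩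
    · have := sumMapCompl_injective A (a₁ := (gh.1.1, gh.2.1)) (a₂ := (gh'.1.1, gh'.2.1))
        (congrArg (fun F => F.1.1) h)
      exact Prod.ext (Subtype.ext (congrArg Prod.fst this))
        (Subtype.ext (congrArg Prod.snd this))
    · obtain ⟨⟨f, hf⟩, hA⟩ := F
      have hleft : ∀ a, (f a).isLeft ↔ a ∈ A := fun a => by rw [← hA]; simp
      let g : A → β := fun a => (f a).getLeft ((hleft a).2 a.2)
      let h : {a // a ∉ A} → γ := fun a =>
        (f a).getRight (Sum.not_isLeft.1 ((hleft a).not.2 a.2))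
      have hf' : sumMapCompl A g h = f := funext fun a => by
        by_cases ha : a ∈ A
        · rw [sumMapCompl, comp_apply, Equiv.sumCompl_symm_apply_of_pos ha, Sum.map_inl]
          exact Sum.inl_getLeft _ _
        · rw [sumMapCompl, comp_apply, Equiv.sumCompl_symm_apply_of_neg ha, Sum.map_inr]
          exact Sum.inr_getRight _ _
      obtain ⟨hg, hh⟩ := (sumMapCompl_surjective_iff A).1 (hf' ▸ hf)
      exact ⟨(⟨g, hg⟩, ⟨h, hh⟩), Subtype.ext (Subtype.ext hf')⟩
  rw [← Nat.card_eq_of_bijective glue hglue, Nat.card_prod, card_surjective_eq_surjCount,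
    card_surjective_eq_surjCount, Fintype.card_subtype_compl, Fintype.card_coe]

end Surjections

lemma surjCount_add (n b c : ℕ) :
    surjCount n (b + c) =
      ∑ j ∈ range (n + 1), n.choose j * surjCount j b * surjCount (n - j) c := by
  calc surjCount n (b + c) = Nat.card {f : Fin n → Fin b ⊕ Fin c // Surjective f} := by
        rw [card_surjective_eq_surjCount]; simp
    _ = ∑ A : Finset (Fin n), surjCount #A b * surjCount (n - #A) c := by
        rw [Nat.card_congr
          (Equiv.sigmaFiberEquiv fun F => ({a | (F.1 a).isLeft} : Finset _)).symm, Nat.card_sigma]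
        refine sum_congr rfl fun A _ => ?_
        rw [card_surjective_sum_filter_isLeft]; simp
    _ = ∑ j ∈ range (n + 1), n.choose j * surjCount j b * surjCount (n - j) c := by
        rw [← powerset_univ,
          sum_powerset_apply_card fun j => surjCount j b * surjCount (n - j) c]
        simp [mul_assoc]

section Fibers

variable {α β : Type*} [Fintype α] [DecidableEq β] {f g : α → β}

def fiber (f : α → β) (b : β) : Finset α := {a | f a = b}

@[simp] lemma mem_fiber {a : α} {b : β} : a ∈ fiber f b ↔ f a = b := by simp [fiber]

lemma disjoint_fiber {b b' : β} (h : b ≠ b') : Disjoint (fiber f b) (fiber f b') :=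
  disjoint_left.2 fun _ ha ha' => h ((mem_fiber.1 ha).symm.trans (mem_fiber.1 ha'))

lemma fiber_nonempty (hf : Surjective f) (b : β) : (fiber f b).Nonempty :=
  let ⟨a, ha⟩ := hf b
  ⟨a, mem_fiber.2 ha⟩

lemma fiber_injective (hf : Surjective f) : Injective (fiber f) := fun b b' h => by
  by_contra hne
  have hdisj := disjoint_fiber (f := f) hne
  rw [h, disjoint_self_iff_empty] at hdisj
  exact (fiber_nonempty hf b').ne_empty hdisj

lemma fiber_inj : fiber f = fiber g ↔ f = g :=
  ⟨fun h => funext fun a => (mem_fiber.1 (h ▸ mem_fiber.2 rfl : a ∈ fiber g (f a))).symm,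
    congrArg fiber⟩

lemma exists_fiber_eq (block : β → Finset α) (hdisj : Pairwise (Disjoint on block))
    (hcover : ∀ a, ∃ b, a ∈ block b) : ∃ f : α → β, fiber f = block := by
  choose f hf using hcover
  refine ⟨f, funext fun b => ext fun a => ?_⟩
  rw [mem_fiber]
  refine ⟨fun h => h ▸ hf a, fun ha => ?_⟩
  by_contra hne
  exact disjoint_left.1 (hdisj hne) (hf a) ha

end Fibers

section Mixed

variable (α ι : Type*) [Fintype α] [DecidableEq α] [Fintype ι]

/-- `mixedStirling n (m + 1) r` unfolds to `Nat.card (MixedPartition (Fin n) (Fin m) r)`. -/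
abbrev MixedPartition (r : ℕ) :=
  {x : Σ B : ι → Finset α, Finpartition ((univ : Finset α) \ univ.biUnion B) //
    (∀ i, (x.1 i).Nonempty) ∧ (∀ i j, i ≠ j → Disjoint (x.1 i) (x.1 j)) ∧
      #x.2.parts = r}

variable {α ι} {r : ℕ}

lemma MixedPartition.ext {x y : MixedPartition α ι r} (hB : x.1.1 = y.1.1)
    (hP : x.1.2.parts = y.1.2.parts) : x = y := by
  obtain ⟨⟨B, P⟩, hx⟩ := x
  obtain ⟨⟨B', P'⟩, hy⟩ := y
  obtain rfl : B = B' := hB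
  obtain rfl : P = P' := Finpartition.ext hP
  rfl

def mixedPartitionEquivOfIsEmpty [IsEmpty ι] (r : ℕ) :
    MixedPartition α ι r ≃ {P : Finpartition (univ : Finset α) // #P.parts = r} where
  toFun x := ⟨x.1.2.copy (by simp), x.2.2.2⟩
  invFun P := ⟨⟨isEmptyElim, P.1.copy (by simp)⟩, isEmptyElim, isEmptyElim, P.2⟩
  left_inv _ := MixedPartition.ext (funext isEmptyElim) rfl
  right_inv _ := rfl

variable {κ : Type*} [DecidableEq ι] [DecidableEq κ]

lemma isRight_iff_mem_sdiff_biUnion_fiber_inl (f : α → ι ⊕ κ) (a : α) :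
    (f a).isRight ↔ a ∈ univ \ univ.biUnion (fun i => fiber f (.inl i)) := by
  simp only [mem_sdiff, mem_univ, mem_biUnion, mem_fiber, true_and, not_exists]
  cases f a <;> simp

variable [Fintype κ]

def rightPartition (f : α → ι ⊕ κ) (hf : Surjective f) :
    Finpartition (univ \ univ.biUnion (fun i => fiber f (.inl i))) :=
  .ofExistsUnique (univ.image fun j => fiber f (.inr j))
    (by
      simp only [mem_image, mem_univ, true_and, forall_exists_index, forall_apply_eq_imp_iff]
      intro j a ha
      rw [← isRight_iff_mem_sdiff_biUnion_fiber_inl, mem_fiber.1 ha]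
      rfl)
    (by
      intro a ha
      obtain ⟨j, hj⟩ := Sum.isRight_iff.1 ((isRight_iff_mem_sdiff_biUnion_fiber_inl f a).2 ha)
      refine ⟨fiber f (.inr j), ⟨mem_image_of_mem _ (mem_univ j), mem_fiber.2 hj⟩, ?_⟩
      simp only [mem_image, mem_univ, true_and, and_imp, forall_exists_index]
      rintro _ j' rfl ha'
      rw [mem_fiber.1 ha'] at hj
      rw [Sum.inr_injective hj])
    (by
      simp only [mem_image, mem_univ, true_and, not_exists]
      exact fun j => (fiber_nonempty hf _).ne_empty)

def toMixedPartition (F : {f : α → ι ⊕ κ // Surjective f}) :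
    MixedPartition α ι (Fintype.card κ) :=
  ⟨⟨fun i => fiber F.1 (.inl i), rightPartition F.1 F.2⟩,
    fun _ => fiber_nonempty F.2 _,
    fun _ _ hij => disjoint_fiber (Sum.inl_injective.ne hij),
    by
      rw [rightPartition, Finpartition.ofExistsUnique_parts,
        card_image_of_injective _ (show Injective fun j : κ => fiber F.1 (.inr j) from
          (fiber_injective F.2).comp Sum.inr_injective), card_univ]⟩

variable (x : MixedPartition α ι (Fintype.card κ))

lemma exists_fiber_eq_sumElim (e : κ ≃ x.1.2.parts) :
    ∃ f : α → ι ⊕ κ, fiber f = Sum.elim x.1.1 fun j => (e j).1 := by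
  obtain ⟨⟨B, P⟩, -, hB, -⟩ := x
  have hBP (i : ι) (j : κ) : Disjoint (B i) (e j).1 :=
    (disjoint_sdiff.mono_left (subset_biUnion_of_mem B (mem_univ i))).mono_right (P.le (e j).2)
  refine exists_fiber_eq _ ?_ fun a => ?_
  · rintro (i | j) (i' | j') hne
    · exact hB i i' fun h => hne (congrArg _ h)
    · exact hBP i j'
    · exact (hBP i' j).symm
    · exact P.disjoint (e j).2 (e j').2 fun h => hne (congrArg _ (e.injective (Subtype.ext h)))
  · by_cases ha : a ∈ univ.biUnion B
    · obtain ⟨i, -, hi⟩ := mem_biUnion.1 ha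
      exact ⟨.inl i, hi⟩
    · obtain ⟨t, ht, hat⟩ := P.exists_mem (mem_sdiff.2 ⟨mem_univ a, ha⟩)
      exact ⟨.inr (e.symm ⟨t, ht⟩), by simpa using hat⟩

noncomputable def partLabels
    (F : {F : {f : α → ι ⊕ κ // Surjective f} // toMixedPartition F = x}) :
    κ ≃ x.1.2.parts :=
  .ofBijective (fun j => ⟨fiber F.1.1 (.inr j), by
    obtain ⟨F, rfl⟩ := F; exact mem_image_of_mem _ (mem_univ j)⟩)
    ((Fintype.bijective_iff_injective_and_card _).2
      ⟨fun j j' h => Sum.inr_injective (fiber_injective F.1.2 (congrArg Subtype.val h)),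
        by simp [x.2.2.2]⟩)

lemma bijective_partLabels : Bijective (partLabels x) := by
  refine ⟨fun F F' h => ?_, fun e => ?_⟩
  · have hl (i : ι) : fiber F.1.1 (.inl i) = fiber F'.1.1 (.inl i) :=
      congrFun (congrArg (fun y => y.1.1) (F.2.trans F'.2.symm)) i
    have hr (j : κ) : fiber F.1.1 (.inr j) = fiber F'.1.1 (.inr j) :=
      congrArg (fun e => (e j).1) h
    exact Subtype.ext (Subtype.ext (fiber_inj.1 (funext (Sum.forall.2 ⟨hl, hr⟩))))
  · obtain ⟨f, hf⟩ := exists_fiber_eq_sumElim x e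
    have hsurj : Surjective f := by
      intro b
      suffices (fiber f b).Nonempty from this.imp fun _ => mem_fiber.1
      rw [hf]
      cases b with
      | inl i => exact x.2.1 i
      | inr j => exact x.1.2.nonempty_of_mem_parts (e j).2
    have hx : toMixedPartition ⟨f, hsurj⟩ = x := by
      refine MixedPartition.ext (funext fun i => congrFun hf (.inl i)) ?_
      ext p
      simp only [toMixedPartition, rightPartition, Finpartition.ofExistsUnique_parts, hf,
        Sum.elim_inr, mem_image, mem_univ, true_and]
      exact ⟨by rintro ⟨j, rfl⟩; exact (e j).2, fun hp => ⟨e.symm ⟨p, hp⟩, by simp⟩⟩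
    exact ⟨⟨⟨f, hsurj⟩, hx⟩, Equiv.ext fun j => Subtype.ext (congrFun hf (.inr j))⟩

lemma card_fiber_toMixedPartition :
    Nat.card {F : {f : α → ι ⊕ κ // Surjective f} // toMixedPartition F = x} =
      (Fintype.card κ).factorial := by
  rw [Nat.card_eq_of_bijective _ (bijective_partLabels x), Nat.card_eq_fintype_card,
    Fintype.card_equiv (Fintype.equivOfCardEq (by simp [x.2.2.2]))]

variable (α ι κ)

lemma card_surjective_sum :
    Nat.card {f : α → ι ⊕ κ // Surjective f} =
      Nat.card (MixedPartition α ι (Fintype.card κ)) * (Fintype.card κ).factorial := by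
  rw [Nat.card_congr (Equiv.sigmaFiberEquiv toMixedPartition).symm, Nat.card_sigma,
    Nat.card_eq_fintype_card]
  simp only [card_fiber_toMixedPartition, sum_const, card_univ, smul_eq_mul]

end Mixed

lemma mixedStirling_succ_mul_factorial (n m r : ℕ) :
    mixedStirling n (m + 1) r * r.factorial = surjCount n (m + r) := by
  have h := card_surjective_sum (Fin n) (Fin m) (Fin r)
  rw [card_surjective_eq_surjCount] at h
  simp only [Fintype.card_fin, Fintype.card_sum] at h
  exact h.symm

lemma stirling_mul_factorial (n s : ℕ) : stirling n s * s.factorial = surjCount n s := by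
  have h : stirling n s = mixedStirling n 1 s :=
    Nat.card_congr (mixedPartitionEquivOfIsEmpty (α := Fin n) (ι := Fin 0) s).symm
  rw [h, mixedStirling_succ_mul_factorial, zero_add]

theorem mixedStirling_convolution_general (n k s r : ℕ)
    (hk : 1 ≤ k) (hsr : s ≤ r) :
    r.choose s * mixedStirling n k r =
      ∑ j ∈ Finset.range (n + 1),
        n.choose j * stirling (n - j) s * mixedStirling j k (r - s) := by
  obtain ⟨m, rfl⟩ : ∃ m, k = m + 1 := ⟨k - 1, by omega⟩
  obtain ⟨t, rfl⟩ : ∃ t, r = t + s := ⟨r - s, by omega⟩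
  rw [Nat.add_sub_cancel]
  apply Nat.eq_of_mul_eq_mul_right (Nat.mul_pos t.factorial_pos s.factorial_pos)
  calc (t + s).choose s * mixedStirling n (m + 1) (t + s) * (t.factorial * s.factorial)
      = mixedStirling n (m + 1) (t + s) * (t + s).factorial := by
        rw [← Nat.add_choose_mul_factorial_mul_factorial]; ring
    _ = surjCount n ((m + t) + s) := by rw [mixedStirling_succ_mul_factorial, add_assoc]
    _ = ∑ j ∈ range (n + 1), n.choose j * surjCount j (m + t) * surjCount (n - j) s :=
        surjCount_add n (m + t) s
    _ = _ := by
        rw [sum_mul]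
        refine sum_congr rfl fun j _ => ?_
        rw [← stirling_mul_factorial (n - j) s, ← mixedStirling_succ_mul_factorial j m t]
        ring

theorem mixedStirling_convolution (n k s r : ℕ)
    (hn : 1 ≤ n) (hk : 1 ≤ k) (hs : 1 ≤ s) (hsr : s ≤ r) :
    r.choose s * mixedStirling n k r =
      ∑ j ∈ Finset.range (n + 1),
        n.choose j * stirling (n - j) s * mixedStirling j k (r - s) :=
  mixedStirling_convolution_general n k s r hk hsr
end

section
/- For positive integers n, r and integers 1 ≤ s ≤ k−1 (with k ≥ 2), the mixed Stirling numbers of the second kind satisfy the convolution identity S(n,k,r) = Σ_{j=0}^{n} (n choose j) · s! · {n−j brace s} · S(j,k−s,r). -/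
/-!
Split the `k - 1` blocks `B_i` into the first `s` and the remaining `k - s - 1`. The first `s`
blocks form an ordered partition of their union `T` into `s` blocks, counted by
`s! * {#T brace s}`, and what is left is a mixed structure with `k - s - 1` blocks on the
complement of `T`. That count depends only on the size of the ground set, so it is
`S(n - #T, k - s, r)`, and grouping the sets `T` by size gives the binomial coefficients.
-/

open Finset
open scoped Nat

namespace Finpartition

variable {α β : Type*} [DecidableEq α] [DecidableEq β]

def finsetMap {s : Finset α} (f : α ↪ β) (P : Finpartition s) : Finpartition (s.map f) where
  parts := P.parts.map (mapEmbedding f).toEmbedding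
  supIndep := by
    rw [supIndep_iff_pairwiseDisjoint]
    rintro _ hp _ hq hpq
    simp only [coe_map, Set.mem_image, mem_coe] at hp hq
    obtain ⟨p, hp, rfl⟩ := hp
    obtain ⟨q, hq, rfl⟩ := hq
    exact (disjoint_map f).2 (P.disjoint hp hq (ne_of_apply_ne _ hpq))
  sup_parts := by
    conv_rhs => rw [← P.sup_parts]
    ext x
    simp only [sup_map, mem_sup, Function.comp_apply, id, RelEmbedding.coe_toEmbedding,
      mapEmbedding_apply, mem_map]
    grind
  bot_notMem := by simp

noncomputable def finsetComap {s : Finset α} (f : α ↪ β) (Q : Finpartition (s.map f)) :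
    Finpartition s where
  parts := Q.parts.image fun p => p.preimage f f.injective.injOn
  supIndep := by
    rw [supIndep_iff_pairwiseDisjoint]
    rintro _ hp _ hq hpq
    simp only [coe_image, Set.mem_image, mem_coe] at hp hq
    obtain ⟨p, hp, rfl⟩ := hp
    obtain ⟨q, hq, rfl⟩ := hq
    have hpq' : p ≠ q := by rintro rfl; exact hpq rfl
    exact disjoint_left.2 fun x hxp hxq =>
      disjoint_left.1 (Q.disjoint hp hq hpq') (mem_preimage.1 hxp) (mem_preimage.1 hxq)
  sup_parts := by
    ext x
    simpa using Finset.ext_iff.1 Q.sup_parts (f x)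
  bot_notMem := by
    simp only [bot_eq_empty, mem_image, not_exists, not_and]
    intro p hp h
    obtain ⟨y, hy⟩ := Q.nonempty_of_mem_parts hp
    obtain ⟨x, -, rfl⟩ := mem_map.1 (Q.le hp hy)
    simpa [h] using (mem_preimage (hf := f.injective.injOn)).2 hy

noncomputable def finsetMapEquiv (f : α ↪ β) (s : Finset α) :
    Finpartition s ≃ Finpartition (s.map f) where
  toFun := finsetMap f
  invFun := finsetComap f
  left_inv P := by
    ext p
    simp [finsetMap, finsetComap, preimage_map]
  right_inv Q := by
    have hQ : ∀ q ∈ Q.parts, (q.preimage f f.injective.injOn).map f = q := fun q hq => by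
      obtain ⟨u, -, rfl⟩ := subset_map_iff.1 (Q.le hq)
      rw [preimage_map]
    ext p
    simp only [finsetMap, finsetComap, mem_map, mem_image]
    constructor
    · rintro ⟨_, ⟨q, hq, rfl⟩, rfl⟩
      exact (congrArg (· ∈ Q.parts) (hQ q hq)).mpr hq
    · exact fun hp => ⟨_, ⟨p, hp, rfl⟩, hQ p hp⟩

lemma card_parts_finsetMap {s : Finset α} (f : α ↪ β) (P : Finpartition s) :
    #(P.finsetMap f).parts = #P.parts :=
  card_map _

end Finpartition

lemma Finset.exists_fin_embedding_map_univ_eq {β : Type*} (s : Finset β) :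
    ∃ f : Fin #s ↪ β, univ.map f = s :=
  ⟨s.equivFin.symm.toEmbedding.trans (Function.Embedding.subtype _), by
    rw [← map_map, map_univ_equiv, univ_eq_attach, attach_map_val]⟩

lemma card_finpartition_map {α β : Type*} [DecidableEq α] [DecidableEq β] (f : α ↪ β)
    (s : Finset α) (r : ℕ) :
    Nat.card {P : Finpartition (s.map f) // #P.parts = r} =
      Nat.card {P : Finpartition s // #P.parts = r} :=
  Nat.card_congr ((Finpartition.finsetMapEquiv f s).subtypeEquiv fun P => by
    rw [Finpartition.finsetMapEquiv, Equiv.coe_fn_mk, Finpartition.card_parts_finsetMap]).symm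

lemma card_finpartition_eq_stirling {β : Type*} [DecidableEq β] (s : Finset β) (r : ℕ) :
    Nat.card {P : Finpartition s // #P.parts = r} = stirling #s r := by
  obtain ⟨f, hf⟩ := s.exists_fin_embedding_map_univ_eq
  rw [← hf, card_finpartition_map, card_map, card_univ, Fintype.card_fin, stirling]

lemma Finset.map_sdiff_biUnion {α β ι : Type*} [DecidableEq α] [DecidableEq β] (f : α ↪ β)
    (S : Finset α) (t : Finset ι) (B : ι → Finset α) :
    (S \ t.biUnion B).map f = S.map f \ t.biUnion fun i => (B i).map f := by
  rw [Finset.map_sdiff]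
  congr 1
  simp only [map_eq_image, biUnion_image]

lemma biUnion_univ_append {β : Type*} [DecidableEq β] {a b : ℕ} (B₁ : Fin a → Finset β)
    (B₂ : Fin b → Finset β) :
    univ.biUnion (Fin.append B₁ B₂) = univ.biUnion B₁ ∪ univ.biUnion B₂ := by
  ext x
  simp only [mem_biUnion, mem_univ, true_and, mem_union]
  constructor
  · rintro ⟨i, hi⟩
    induction i using Fin.addCases with
    | left i => exact Or.inl ⟨i, by simpa using hi⟩
    | right i => exact Or.inr ⟨i, by simpa using hi⟩
  · rintro (⟨i, hi⟩ | ⟨i, hi⟩)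
    exacts [⟨Fin.castAdd b i, by simpa⟩, ⟨Fin.natAdd a i, by simpa⟩]

lemma Function.Injective.of_card_image_univ {γ : Type*} [DecidableEq γ] {a : ℕ} {g : Fin a → γ}
    (h : #(univ.image g) = a) : Function.Injective g := by
  rw [← Set.injOn_univ, ← coe_univ, ← card_image_iff, h, card_fin]

lemma card_filter_image_univ_eq_factorial {γ : Type*} [Fintype γ] [DecidableEq γ]
    (F : Finset γ) :
    #{g : Fin #F → γ | univ.image g = F} = (#F)! := by
  have : (#F)! = #(univ : Finset (Fin #F ≃ F)) := by
    rw [card_univ, Fintype.card_equiv F.equivFin.symm, Fintype.card_fin]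
  rw [this]
  symm
  refine card_nbij (fun e i => e i) (fun e _ => ?_) (fun e _ e' _ h => ?_) (fun g hg => ?_)
  · refine mem_filter.2 ⟨mem_univ _, ?_⟩
    ext x
    simp only [mem_image, mem_univ, true_and]
    exact ⟨by rintro ⟨i, rfl⟩; exact (e i).2, fun hx => ⟨e.symm ⟨x, hx⟩, by simp⟩⟩
  · exact Equiv.ext fun i => Subtype.ext (congrFun h i)
  · replace hg : univ.image g = F := (mem_filter.1 hg).2
    have hmem i : g i ∈ F := hg ▸ mem_image_of_mem g (mem_univ i)
    refine ⟨.ofBijective (fun i => ⟨g i, hmem i⟩) ⟨fun i j h => ?_, fun x => ?_⟩, mem_univ _, rfl⟩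
    · exact Function.Injective.of_card_image_univ (by rw [hg]) (congrArg Subtype.val h)
    · obtain ⟨i, -, hi⟩ := mem_image.1 (show (x : γ) ∈ univ.image g by rw [hg]; exact x.2)
      exact ⟨i, Subtype.ext hi⟩

lemma injective_of_nonempty_of_disjoint {ι β : Type*} {B : ι → Finset β}
    (hne : ∀ i, (B i).Nonempty) (hdisj : ∀ i j, i ≠ j → Disjoint (B i) (B j)) :
    Function.Injective B := by
  intro i j h
  by_contra hij
  exact (hne i).ne_empty (disjoint_self.1 (h ▸ hdisj i j hij))

variable {β : Type*} [Fintype β] [DecidableEq β]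

def blockFamilies (S : Finset β) (k : ℕ) : Finset (Fin k → Finset β) :=
  {B | (∀ i, B i ⊆ S) ∧ (∀ i, (B i).Nonempty) ∧ ∀ i j, i ≠ j → Disjoint (B i) (B j)}

@[simp]
lemma mem_blockFamilies {S : Finset β} {k : ℕ} {B : Fin k → Finset β} :
    B ∈ blockFamilies S k ↔
      (∀ i, B i ⊆ S) ∧ (∀ i, (B i).Nonempty) ∧ ∀ i j, i ≠ j → Disjoint (B i) (B j) := by
  simp [blockFamilies]

/-- Choosing the blocks first keeps the transport along embeddings (`mixedCount_map`) free of
dependent types. -/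
noncomputable def mixedCount (S : Finset β) (k r : ℕ) : ℕ :=
  ∑ B ∈ blockFamilies S k, stirling #(S \ univ.biUnion B) r

lemma mixedStirling_eq_mixedCount (n k r : ℕ) :
    mixedStirling n k r = mixedCount (univ : Finset (Fin n)) (k - 1) r := by
  let e : {x : Σ B : Fin (k - 1) → Finset (Fin n), Finpartition (univ \ univ.biUnion B) //
      (∀ i, (x.1 i).Nonempty) ∧ (∀ i j, i ≠ j → Disjoint (x.1 i) (x.1 j)) ∧ #x.2.parts = r} ≃
      Σ B : blockFamilies univ (k - 1),
        {P : Finpartition (univ \ univ.biUnion B.1) // #P.parts = r} :=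
    { toFun x := ⟨⟨x.1.1, mem_blockFamilies.2 ⟨fun _ => subset_univ _, x.2.1, x.2.2.1⟩⟩,
        x.1.2, x.2.2.2⟩
      invFun y := ⟨⟨y.1, y.2.1⟩, (mem_blockFamilies.1 y.1.2).2.1,
        (mem_blockFamilies.1 y.1.2).2.2, y.2.2⟩ }
  rw [mixedStirling, Nat.card_congr e, Nat.card_sigma, mixedCount]
  simp only [card_finpartition_eq_stirling]
  exact sum_coe_sort (blockFamilies univ (k - 1)) fun B => stirling #(univ \ univ.biUnion B) r

lemma mixedCount_map {α : Type*} [Fintype α] [DecidableEq α] (f : α ↪ β) (S : Finset α)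
    (k r : ℕ) : mixedCount (S.map f) k r = mixedCount S k r := by
  symm
  refine sum_nbij (fun B i => (B i).map f) ?_ ?_ ?_ ?_
  · intro B hB
    obtain ⟨hS, hne, hdisj⟩ := mem_blockFamilies.1 hB
    exact mem_blockFamilies.2 ⟨fun i => map_subset_map.2 (hS i), fun i => (hne i).map,
      fun i j hij => (disjoint_map f).2 (hdisj i j hij)⟩
  · intro B _ C _ h
    funext i
    exact map_injective f (congrFun h i)
  · intro C hC
    obtain ⟨hS, hne, hdisj⟩ := mem_blockFamilies.1 hC
    choose B hBS hB using fun i => subset_map_iff.1 (hS i)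
    refine ⟨B, mem_blockFamilies.2 ⟨hBS, fun i => ?_, fun i j hij => ?_⟩,
      funext fun i => (hB i).symm⟩
    · simpa [hB] using hne i
    · simpa [hB] using hdisj i j hij
  · intro B _
    simp only [← map_sdiff_biUnion, card_map]

lemma mixedCount_eq_mixedStirling (S : Finset β) (k r : ℕ) :
    mixedCount S (k - 1) r = mixedStirling #S k r := by
  obtain ⟨f, hf⟩ := S.exists_fin_embedding_map_univ_eq
  rw [← hf, mixedCount_map, mixedStirling_eq_mixedCount, card_map, card_univ, Fintype.card_fin]

lemma append_mem_blockFamilies_iff {S : Finset β} {a b : ℕ} {B₁ : Fin a → Finset β}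
    {B₂ : Fin b → Finset β} :
    Fin.append B₁ B₂ ∈ blockFamilies S (a + b) ↔
      B₁ ∈ blockFamilies S a ∧ B₂ ∈ blockFamilies (S \ univ.biUnion B₁) b := by
  have hne (i : Fin a) (j : Fin b) : Fin.castAdd b i ≠ Fin.natAdd a j := by
    rw [ne_eq, Fin.ext_iff, Fin.val_castAdd, Fin.val_natAdd]; omega
  have hne' (i : Fin a) (j : Fin b) : Fin.natAdd a j ≠ Fin.castAdd b i := (hne i j).symm
  simp only [mem_blockFamilies, Fin.forall_fin_add, Fin.append_left, Fin.append_right, ne_eq,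
    subset_sdiff, disjoint_biUnion_right, mem_univ, true_implies, forall_and,
    (Fin.castAdd_injective _ _).eq_iff, (Fin.natAdd_injective _ _).eq_iff, hne, hne',
    not_false_eq_true]
  constructor
  · rintro ⟨⟨hS₁, hS₂⟩, ⟨hne₁, hne₂⟩, ⟨hd₁, hd₂₁⟩, -, hd₂⟩
    exact ⟨⟨hS₁, hne₁, hd₁⟩, ⟨hS₂, hd₂₁⟩, hne₂, hd₂⟩
  · rintro ⟨⟨hS₁, hne₁, hd₁⟩, ⟨hS₂, hd₂₁⟩, hne₂, hd₂⟩
    exact ⟨⟨hS₁, hS₂⟩, ⟨hne₁, hne₂⟩, ⟨hd₁, hd₂₁⟩, fun i j => (hd₂₁ j i).symm, hd₂⟩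

lemma sum_blockFamilies_add {M : Type*} [AddCommMonoid M] (S : Finset β) (a b : ℕ)
    (F : (Fin (a + b) → Finset β) → M) :
    ∑ B ∈ blockFamilies S (a + b), F B =
      ∑ B₁ ∈ blockFamilies S a, ∑ B₂ ∈ blockFamilies (S \ univ.biUnion B₁) b,
        F (Fin.append B₁ B₂) := by
  rw [← Fintype.sum_ite_mem, ← (Fin.appendEquiv a b).sum_comp, Fintype.sum_prod_type]
  simp only [Fin.appendEquiv, Equiv.coe_fn_mk, append_mem_blockFamilies_iff, ite_and]
  simp only [sum_ite_irrel, sum_const_zero, Fintype.sum_ite_mem]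

lemma mixedCount_add (S : Finset β) (a b r : ℕ) :
    mixedCount S (a + b) r =
      ∑ B ∈ blockFamilies S a, mixedCount (S \ univ.biUnion B) b r := by
  rw [mixedCount, sum_blockFamilies_add]
  simp only [mixedCount, biUnion_univ_append, sdiff_sdiff_left, sup_eq_union]

def orderedPartitions (T : Finset β) (a : ℕ) : Finset (Fin a → Finset β) :=
  {B ∈ blockFamilies T a | univ.biUnion B = T}

lemma filter_blockFamilies_biUnion_eq {S T : Finset β} (hT : T ⊆ S) (a : ℕ) :
    {B ∈ blockFamilies S a | univ.biUnion B = T} = orderedPartitions T a := by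
  ext B
  simp only [orderedPartitions, mem_filter, mem_blockFamilies]
  constructor
  · rintro ⟨⟨-, hne, hdisj⟩, hB⟩
    exact ⟨⟨fun i => hB ▸ subset_biUnion_of_mem B (mem_univ i), hne, hdisj⟩, hB⟩
  · rintro ⟨⟨hBT, hne, hdisj⟩, hB⟩
    exact ⟨⟨fun i => (hBT i).trans hT, hne, hdisj⟩, hB⟩

lemma sum_blockFamilies_eq_sum_powerset {M : Type*} [AddCommMonoid M] (S : Finset β) (a : ℕ)
    (g : Finset β → M) :
    ∑ B ∈ blockFamilies S a, g (univ.biUnion B) =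
      ∑ T ∈ S.powerset, #(orderedPartitions T a) • g T := by
  have hmaps : ∀ B ∈ blockFamilies S a, univ.biUnion B ∈ S.powerset := fun B hB =>
    mem_powerset.2 (biUnion_subset.2 fun i _ => (mem_blockFamilies.1 hB).1 i)
  rw [← sum_fiberwise_of_maps_to hmaps]
  refine sum_congr rfl fun T hT => ?_
  rw [← filter_blockFamilies_biUnion_eq (mem_powerset.1 hT), ← sum_const]
  exact sum_congr rfl fun B hB => by rw [(mem_filter.1 hB).2]

lemma mem_orderedPartitions_of_image_eq_parts {T : Finset β} {a : ℕ} {P : Finpartition T}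
    (hP : #P.parts = a) {B : Fin a → Finset β} (hB : univ.image B = P.parts) :
    B ∈ orderedPartitions T a := by
  have hmem i : B i ∈ P.parts := hB ▸ mem_image_of_mem B (mem_univ i)
  have hinj : Function.Injective B := .of_card_image_univ (by rw [hB, hP])
  refine mem_filter.2 ⟨mem_blockFamilies.2 ⟨fun i => P.le (hmem i),
    fun i => P.nonempty_of_mem_parts (hmem i),
    fun i j hij => P.disjoint (hmem i) (hmem j) (hinj.ne hij)⟩, ?_⟩
  rw [← P.biUnion_parts, ← hB, image_biUnion]
  rfl

lemma exists_finpartition_parts_eq_image {T : Finset β} {a : ℕ} {B : Fin a → Finset β}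
    (hB : B ∈ orderedPartitions T a) :
    ∃ P : Finpartition T, #P.parts = a ∧ P.parts = univ.image B := by
  obtain ⟨⟨-, hne, hdisj⟩, hT⟩ := by simpa [orderedPartitions] using hB
  have hinj := injective_of_nonempty_of_disjoint hne hdisj
  have hindep : (univ.image B).SupIndep id := by
    rw [supIndep_iff_pairwiseDisjoint, coe_image, coe_univ, Set.image_univ]
    rintro _ ⟨i, rfl⟩ _ ⟨j, rfl⟩ hij
    exact hdisj i j (ne_of_apply_ne B hij)
  let P : Finpartition T :=
    .ofErase (univ.image B) hindep (by rw [sup_image, sup_eq_biUnion]; exact hT)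
  have hP : P.parts = univ.image B :=
    erase_eq_of_notMem (by simpa using fun i => (hne i).ne_empty)
  exact ⟨P, by rw [hP, card_image_of_injective _ hinj, card_fin], hP⟩

lemma card_orderedPartitions_filter_image_eq_parts {T : Finset β} (P : Finpartition T) :
    #{B ∈ orderedPartitions T #P.parts | univ.image B = P.parts} = (#P.parts)! := by
  rw [← card_filter_image_univ_eq_factorial P.parts]
  congr 1
  ext B
  simp only [mem_filter, mem_univ, true_and, and_iff_right_iff_imp]
  exact mem_orderedPartitions_of_image_eq_parts rfl

lemma card_orderedPartitions (T : Finset β) (a : ℕ) :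
    #(orderedPartitions T a) = a ! * stirling #T a := by
  set withCard : Finset (Finpartition T) := {P | #P.parts = a}
  have hmaps :
      ∀ B ∈ orderedPartitions T a, univ.image B ∈ withCard.image Finpartition.parts := by
    intro B hB
    obtain ⟨P, hP, hPB⟩ := exists_finpartition_parts_eq_image hB
    exact mem_image.2 ⟨P, mem_filter.2 ⟨mem_univ _, hP⟩, hPB⟩
  have hfiber :
      ∀ P ∈ withCard, #{B ∈ orderedPartitions T a | univ.image B = P.parts} = a ! := by
    intro P hP
    obtain rfl : #P.parts = a := (mem_filter.1 hP).2
    exact card_orderedPartitions_filter_image_eq_parts P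
  rw [card_eq_sum_card_fiberwise hmaps, sum_image fun P _ Q _ h => Finpartition.ext h,
    sum_congr rfl hfiber, sum_const, smul_eq_mul, mul_comm, ← card_finpartition_eq_stirling,
    Nat.card_eq_fintype_card, Fintype.card_subtype]

theorem mixedStirling_convolution'_general (n r k s : ℕ) (hsk : s ≤ k - 1) :
    mixedStirling n k r =
      ∑ j ∈ Finset.range (n + 1),
        n.choose j * s.factorial * stirling (n - j) s * mixedStirling j (k - s) r := by
  have hk : k - 1 = s + (k - s - 1) := by omega
  rw [mixedStirling_eq_mixedCount, hk, mixedCount_add,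
    sum_blockFamilies_eq_sum_powerset univ s fun T => mixedCount (univ \ T) (k - s - 1) r]
  simp only [card_orderedPartitions, mixedCount_eq_mixedStirling, card_univ_sdiff,
    Fintype.card_fin]
  rw [sum_powerset_apply_card fun j => (s ! * stirling j s) • mixedStirling (n - j) (k - s) r,
    card_univ, Fintype.card_fin, ← sum_range_reflect]
  refine sum_congr rfl fun j hj => ?_
  have hj : j ≤ n := Nat.lt_succ_iff.1 (mem_range.1 hj)
  rw [Nat.add_sub_cancel, Nat.choose_symm hj, Nat.sub_sub_self hj, smul_eq_mul, smul_eq_mul]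
  ring

theorem mixedStirling_convolution' (n r k s : ℕ)
    (hn : 1 ≤ n) (hr : 1 ≤ r) (hk : 2 ≤ k) (hs : 1 ≤ s) (hsk : s ≤ k - 1) :
    mixedStirling n k r =
      ∑ j ∈ Finset.range (n + 1),
        n.choose j * s.factorial * stirling (n - j) s * mixedStirling j (k - s) r :=
  mixedStirling_convolution'_general n r k s hsk
end

section
/- For positive integers n, k, m and r, the mixed restricted Stirling numbers of the second kind satisfy n · S_{≤m}(n,k,r) = Σ_{j=1}^{m} j · (n choose j) · [ S_{≤m}(n−j,k,r−1) + (k−1)·S_{≤m}(n−j,k−1,r) ], where the binomial coefficient (n choose j) is 0 for j > n, terms whose first argument n−j is negative are taken to be 0, and the term (k−1)·S_{≤m}(n−j,k−1,r) is taken to be 0 when k = 1. -/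
/-- The mixed restricted Stirling number of the second kind `S_{≤ m}(n, k, r)`: the number of
pairs `(π, (B_2, …, B_k))` where `B_2, …, B_k` are pairwise disjoint nonempty subsets of
`{1, …, n}` of size at most `m` and `π` is a partition of the complement of their union into
exactly `r` nonempty blocks, each of size at most `m`. -/
noncomputable def mixedStirlingLe (m n k r : ℕ) : ℕ :=
  Nat.card {x : Σ B : Fin (k - 1) → Finset (Fin n),
      Finpartition ((Finset.univ : Finset (Fin n)) \ Finset.univ.biUnion B) //
    (∀ i, (x.1 i).Nonempty) ∧ (∀ i, (x.1 i).card ≤ m) ∧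
    (∀ i j, i ≠ j → Disjoint (x.1 i) (x.1 j)) ∧
    x.2.parts.card = r ∧ ∀ p ∈ x.2.parts, p.card ≤ m}

/-!
Double counting of pairs of a configuration and a marked point `a`. The point lies in exactly
one block `c`: a part of the partition or one of the `k - 1` labelled blocks. Deleting `c` is a
bijection from the configurations having `c` as a part (resp. as the `i`-th labelled block) onto
the configurations on the complement of `c` with one part (resp. one labelled block) fewer, as
long as `1 ≤ #c ≤ m`. Grouping by `j = #c` gives the `j * n.choose j` choices of `(c, a)`.

Deleting a block changes the ground set, so configurations are set up on an arbitrary ground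
finset; their number depends only on its size, by transport along an embedding.
-/

open Finset Function

theorem Finset.map_biUnion {α β ι : Type*} [DecidableEq α] [DecidableEq β] (f : α ↪ β)
    (t : Finset ι) (B : ι → Finset α) :
    (t.biUnion B).map f = t.biUnion fun i => (B i).map f := by
  simp only [map_eq_image, biUnion_image]

theorem Fin.pairwise_disjoint_insertNth {β : Type*} [PartialOrder β] [OrderBot β] {n : ℕ}
    (t : Fin (n + 1)) {c : β} {B : Fin n → β} (hc : ∀ i, Disjoint c (B i))
    (hB : Pairwise (Disjoint on B)) :
    Pairwise (Disjoint on (Fin.insertNth t c B : Fin (n + 1) → β)) := by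
  intro i j hij
  induction i using t.succAboveCases <;> induction j using t.succAboveCases
  · exact absurd rfl hij
  · simpa [onFun] using hc _
  · simpa [onFun] using (hc _).symm
  · simpa [onFun] using hB (ne_of_apply_ne _ hij)

theorem Fin.forall_insertNth_iff {β : Type*} {n : ℕ} (t : Fin (n + 1)) (P : β → Prop) {c : β}
    {B : Fin n → β} :
    (∀ i, P ((t.insertNth c B : Fin (n + 1) → β) i)) ↔ P c ∧ ∀ i, P (B i) := by
  simp [Fin.forall_iff_succAbove t]

theorem Fin.biUnion_univ_insertNth {β : Type*} [DecidableEq β] {n : ℕ} (t : Fin (n + 1))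
    (c : Finset β) (B : Fin n → Finset β) :
    univ.biUnion (t.insertNth c B) = c ∪ univ.biUnion B := by
  ext a; simp [Fin.exists_iff_succAbove t]

theorem Fin.biUnion_univ_eq_union_removeNth {β : Type*} [DecidableEq β] {n : ℕ}
    (t : Fin (n + 1)) (B : Fin (n + 1) → Finset β) :
    univ.biUnion B = B t ∪ univ.biUnion (t.removeNth B) := by
  ext a; simp [Fin.exists_iff_succAbove t, Fin.removeNth]

theorem Finset.sum_filter_powerset_apply_card {α M : Type*} [AddCommMonoid M] (s : Finset α)
    (T : Finset ℕ) (f : ℕ → M) :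
    ∑ c ∈ s.powerset with #c ∈ T, f #c = ∑ j ∈ T, (#s).choose j • f j := by
  rw [← sum_fiberwise_of_maps_to (g := card) (t := T) fun c hc => (mem_filter.1 hc).2]
  refine sum_congr rfl fun j hj => ?_
  have hfiber : {c ∈ {c ∈ s.powerset | #c ∈ T} | #c = j} = s.powersetCard j := by
    ext c
    simp only [mem_filter, mem_powerset, mem_powersetCard]
    exact ⟨fun h => ⟨h.1.1, h.2⟩, fun h => ⟨⟨h.1, h.2 ▸ hj⟩, h.2⟩⟩
  rw [hfiber, sum_congr rfl fun c hc => by rw [(mem_powersetCard.1 hc).2], sum_const,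
    card_powersetCard]

theorem Finset.sum_powerset_card_mul_eq {α : Type*} (s : Finset α) {m : ℕ}
    {F : Finset α → ℕ} {g : ℕ → ℕ} (hF : ∀ c ⊆ s, c.Nonempty → F c = if #c ≤ m then g #c else 0) :
    ∑ c ∈ s.powerset, #c * F c = ∑ j ∈ Icc 1 m, j * (#s).choose j * g j := by
  have hsupp : ∀ c ∈ s.powerset, #c * F c ≠ 0 → #c ∈ Icc 1 m := by
    intro c hcs hne
    have hc := card_pos.1 (Nat.pos_of_ne_zero (left_ne_zero_of_mul hne))
    refine mem_Icc.2 ⟨card_pos.2 hc, not_lt.1 fun hcm => hne ?_⟩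
    rw [hF c (mem_powerset.1 hcs) hc, if_neg hcm.not_ge, mul_zero]
  rw [← sum_filter_of_ne hsupp]
  calc _ = ∑ c ∈ s.powerset with #c ∈ Icc 1 m, #c * g #c := by
        refine sum_congr rfl fun c hc => ?_
        obtain ⟨hcs, hcm⟩ := mem_filter.1 hc
        rw [hF c (mem_powerset.1 hcs) (card_pos.1 (mem_Icc.1 hcm).1), if_pos (mem_Icc.1 hcm).2]
    _ = _ := by
      rw [sum_filter_powerset_apply_card s (Icc 1 m) fun j => j * g j]
      exact sum_congr rfl fun j _ => by rw [smul_eq_mul, mul_left_comm, mul_assoc]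

theorem Finset.sum_sum_ite_eq_sum_mul_card {X C : Type*} [Fintype X] (T : Finset C)
    (R : X → C → Prop) [∀ x c, Decidable (R x c)] (w : C → ℕ) :
    ∑ x, ∑ c ∈ T, (if R x c then w c else 0) = ∑ c ∈ T, w c * #{x | R x c} := by
  rw [sum_comm]
  refine sum_congr rfl fun c _ => ?_
  rw [card_filter, mul_sum]
  simp

namespace Finpartition

variable {α β : Type*} [DecidableEq α] [DecidableEq β] {s : Finset α}

def mapEmbedding (f : α ↪ β) (P : Finpartition s) : Finpartition (s.map f) where
  parts := P.parts.map (Finset.mapEmbedding f).toEmbedding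
  supIndep := by
    rw [supIndep_iff_pairwiseDisjoint, coe_map]
    rintro _ ⟨p, hp, rfl⟩ _ ⟨q, hq, rfl⟩ hpq
    exact (disjoint_map f).2 (P.disjoint hp hq (ne_of_apply_ne _ hpq))
  sup_parts := by
    ext b
    simp only [← P.sup_parts, sup_map, mem_sup, mem_map]
    aesop
  bot_notMem := by simp

@[simp]
theorem parts_mapEmbedding (f : α ↪ β) (P : Finpartition s) :
    (P.mapEmbedding f).parts = P.parts.map (Finset.mapEmbedding f).toEmbedding := rfl

theorem exists_mapEmbedding_eq (f : α ↪ β) (Q : Finpartition (s.map f)) :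
    ∃ P : Finpartition s, P.mapEmbedding f = Q := by
  have hQ : ∀ q ∈ Q.parts, ∃ p : Finset α, p.map f = q := fun q hq =>
    (subset_map_iff.1 (Q.le hq)).imp fun _ hp => hp.2.symm
  let P : Finpartition s :=
  { parts := Q.parts.preimage (Finset.map f) (map_injective f).injOn
    supIndep := by
      rw [supIndep_iff_pairwiseDisjoint]
      intro p hp q hq hpq
      exact (disjoint_map f).1 (Q.disjoint (mem_preimage.1 hp) (mem_preimage.1 hq)
        ((map_injective f).ne hpq))
    sup_parts := by
      apply map_injective f
      ext b
      simp only [← Q.sup_parts, mem_sup, mem_map, mem_preimage, id]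
      refine ⟨fun ⟨a, ⟨p, hp, ha⟩, hab⟩ => ⟨_, hp, hab ▸ mem_map_of_mem f ha⟩,
        fun ⟨q, hq, hb⟩ => ?_⟩
      obtain ⟨p, rfl⟩ := hQ q hq
      obtain ⟨a, ha, rfl⟩ := mem_map.1 hb
      exact ⟨a, ⟨p, hq, ha⟩, rfl⟩
    bot_notMem := by simp }
  refine ⟨P, Finpartition.ext ?_⟩
  ext q
  simp only [parts_mapEmbedding, mem_map, P, mem_preimage]
  constructor
  · rintro ⟨p, hp, rfl⟩; exact hp
  · intro hq
    obtain ⟨p, rfl⟩ := hQ q hq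
    exact ⟨p, hq, rfl⟩

theorem avoid_parts_of_mem {γ : Type*} [GeneralizedBooleanAlgebra γ] [DecidableEq γ] {a b : γ}
    (P : Finpartition a) (hb : b ∈ P.parts) : (P.avoid b).parts = P.parts.erase b := by
  ext c
  rw [mem_avoid, mem_erase]
  constructor
  · rintro ⟨d, hd, hdb, rfl⟩
    have hne : d ≠ b := by rintro rfl; exact hdb le_rfl
    have hdisj : Disjoint d b := P.disjoint hd hb hne
    rw [hdisj.sdiff_eq_left]
    exact ⟨hne, hd⟩
  · rintro ⟨hne, hc⟩
    have hdisj := P.disjoint hc hb hne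
    exact ⟨c, hc, fun hle => P.ne_bot hc (hdisj.eq_bot_of_le hle), hdisj.sdiff_eq_left⟩

end Finpartition

-- The pairs `(π, (B_2, …, B_k))` with `K = k - 1` labelled blocks, on a ground finset `s`.
structure MixedConfig {α : Type*} [DecidableEq α] (m : ℕ) (s : Finset α) (K r : ℕ) where
  blocks : Fin K → Finset α
  partition : Finpartition (s \ univ.biUnion blocks)
  blocks_subset : ∀ i, blocks i ⊆ s
  blocks_nonempty : ∀ i, (blocks i).Nonempty
  card_blocks_le : ∀ i, #(blocks i) ≤ m
  blocks_disjoint : Pairwise (Disjoint on blocks)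
  card_parts : #partition.parts = r
  card_le_of_mem_parts : ∀ p ∈ partition.parts, #p ≤ m

namespace MixedConfig

variable {α β : Type*} [DecidableEq α] [DecidableEq β] {m K r : ℕ} {s : Finset α}

protected theorem ext {x y : MixedConfig m s K r} (hB : x.blocks = y.blocks)
    (hP : x.partition.parts = y.partition.parts) : x = y := by
  cases x; cases y
  subst hB
  cases Finpartition.ext hP
  rfl

instance [Fintype α] : Finite (MixedConfig m s K r) :=
  Finite.of_injective (fun x => (x.blocks, x.partition.parts)) fun _ _ h =>
    MixedConfig.ext (Prod.ext_iff.1 h).1 (Prod.ext_iff.1 h).2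

def map (f : α ↪ β) (x : MixedConfig m s K r) : MixedConfig m (s.map f) K r where
  blocks i := (x.blocks i).map f
  partition := (x.partition.mapEmbedding f).copy (by rw [Finset.map_sdiff, map_biUnion])
  blocks_subset i := map_subset_map.2 (x.blocks_subset i)
  blocks_nonempty i := (x.blocks_nonempty i).map
  card_blocks_le i := (card_map f).trans_le (x.card_blocks_le i)
  blocks_disjoint i j hij := (disjoint_map f).2 (x.blocks_disjoint hij)
  card_parts := by simp [x.card_parts]
  card_le_of_mem_parts := by simpa using x.card_le_of_mem_parts

theorem map_injective (f : α ↪ β) :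
    Injective (map f : MixedConfig m s K r → MixedConfig m (s.map f) K r) := by
  intro x y h
  have hB := congrArg blocks h
  have hP := congrArg (fun z => z.partition.parts) h
  simp only [map, Finpartition.copy_parts, Finpartition.parts_mapEmbedding] at hB hP
  exact MixedConfig.ext (funext fun i => Finset.map_injective f (congrFun hB i))
    (Finset.map_injective _ hP)

theorem map_surjective (f : α ↪ β) :
    Surjective (map f : MixedConfig m s K r → MixedConfig m (s.map f) K r) := by
  intro y
  choose B hBs hB using fun i => subset_map_iff.1 (y.blocks_subset i)
  replace hB : y.blocks = fun i => (B i).map f := funext hB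
  have hground : s.map f \ univ.biUnion y.blocks = (s \ univ.biUnion B).map f := by
    rw [hB, Finset.map_sdiff, map_biUnion]
  obtain ⟨P, hP⟩ := (y.partition.copy hground).exists_mapEmbedding_eq f
  have hparts : P.parts.map (Finset.mapEmbedding f).toEmbedding = y.partition.parts := by
    rw [← Finpartition.parts_mapEmbedding, hP, Finpartition.copy_parts]
  refine ⟨⟨B, P, hBs, fun i => ?_, fun i => ?_, fun i j hij => ?_, ?_, fun p hp => ?_⟩, ?_⟩
  · simpa [hB] using y.blocks_nonempty i
  · simpa [hB] using y.card_blocks_le i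
  · simpa [hB, disjoint_map] using y.blocks_disjoint hij
  · rw [← y.card_parts, ← hparts, card_map]
  · exact (card_map f).symm.trans_le (y.card_le_of_mem_parts _ (hparts ▸ mem_map_of_mem _ hp))
  · exact MixedConfig.ext hB.symm (by simp [map, hparts])

theorem card_map_ground (f : α ↪ β) :
    Nat.card (MixedConfig m (s.map f) K r) = Nat.card (MixedConfig m s K r) :=
  (Nat.card_eq_of_bijective _ ⟨map_injective f, map_surjective f⟩).symm

theorem card_univ_fin_eq_mixedStirlingLe (m n K r : ℕ) :
    Nat.card (MixedConfig m (univ : Finset (Fin n)) K r) = mixedStirlingLe m n (K + 1) r :=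
  Nat.card_congr
    { toFun x := ⟨⟨x.blocks, x.partition⟩, x.blocks_nonempty, x.card_blocks_le,
        fun _ _ h => x.blocks_disjoint h, x.card_parts, x.card_le_of_mem_parts⟩
      invFun y := ⟨y.1.1, y.1.2, fun _ => subset_univ _, y.2.1, y.2.2.1,
        fun _ _ h => y.2.2.2.1 _ _ h, y.2.2.2.2.1, y.2.2.2.2.2⟩
      left_inv _ := rfl
      right_inv _ := rfl }

theorem card_eq_mixedStirlingLe (m : ℕ) (s : Finset α) (K r : ℕ) :
    Nat.card (MixedConfig m s K r) = mixedStirlingLe m #s (K + 1) r := by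
  let f : Fin #s ↪ α := s.equivFin.symm.toEmbedding.trans (.subtype (· ∈ s))
  have hs : univ.map f = s := by
    rw [← map_map, univ_map_equiv_to_embedding, univ_eq_attach, attach_map_val]
  rw [← card_univ_fin_eq_mixedStirlingLe, ← card_map_ground f, hs]

theorem disjoint_blocks_of_mem_parts (x : MixedConfig m s K r) (i : Fin K) {p : Finset α}
    (hp : p ∈ x.partition.parts) : Disjoint (x.blocks i) p :=
  (disjoint_sdiff.mono_left (subset_biUnion_of_mem x.blocks (mem_univ i))).mono_right
    (x.partition.le hp)

variable {c : Finset α}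

def erasePart (x : MixedConfig m s K (r + 1)) (hc : c ∈ x.partition.parts) :
    MixedConfig m (s \ c) K r where
  blocks := x.blocks
  partition := (x.partition.avoid c).copy (sdiff_right_comm ..)
  blocks_subset i := subset_sdiff.2 ⟨x.blocks_subset i, x.disjoint_blocks_of_mem_parts i hc⟩
  blocks_nonempty := x.blocks_nonempty
  card_blocks_le := x.card_blocks_le
  blocks_disjoint := x.blocks_disjoint
  card_parts := by
    rw [Finpartition.copy_parts, Finpartition.avoid_parts_of_mem _ hc, card_erase_of_mem hc,
      x.card_parts, Nat.add_sub_cancel]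
  card_le_of_mem_parts p hp := by
    rw [Finpartition.copy_parts, Finpartition.avoid_parts_of_mem _ hc] at hp
    exact x.card_le_of_mem_parts p (mem_of_mem_erase hp)

def insertPart (y : MixedConfig m (s \ c) K r) (hc : c.Nonempty) (hcm : #c ≤ m) (hcs : c ⊆ s) :
    MixedConfig m s K (r + 1) where
  blocks := y.blocks
  partition := y.partition.extend hc.ne_empty (sdiff_disjoint.mono_left sdiff_subset) <| by
    have hcU : Disjoint c (univ.biUnion y.blocks) := (disjoint_biUnion_right _ _ _).2
      fun i _ => disjoint_sdiff.mono_right (y.blocks_subset i)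
    rw [sdiff_right_comm, sup_eq_union, sdiff_union_of_subset (subset_sdiff.2 ⟨hcs, hcU⟩)]
  blocks_subset i := (y.blocks_subset i).trans sdiff_subset
  blocks_nonempty := y.blocks_nonempty
  card_blocks_le := y.card_blocks_le
  blocks_disjoint := y.blocks_disjoint
  card_parts := by rw [Finpartition.card_extend, y.card_parts]
  card_le_of_mem_parts p hp := by
    rcases mem_insert.1 hp with rfl | hp
    exacts [hcm, y.card_le_of_mem_parts p hp]

def partFiberEquiv (hc : c.Nonempty) (hcm : #c ≤ m) (hcs : c ⊆ s) :
    {x : MixedConfig m s K (r + 1) // c ∈ x.partition.parts} ≃ MixedConfig m (s \ c) K r where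
  toFun x := x.1.erasePart x.2
  invFun y := ⟨y.insertPart hc hcm hcs, mem_insert_self c _⟩
  left_inv x := Subtype.ext <| MixedConfig.ext rfl <| by
    simp [erasePart, insertPart, Finpartition.avoid_parts_of_mem _ x.2, insert_erase x.2]
  right_inv y := MixedConfig.ext rfl <| by
    have hcy : c ∉ y.partition.parts := fun h => hc.ne_empty <| (disjoint_self_iff_empty _).1 <|
      disjoint_sdiff.mono_right ((y.partition.le h).trans sdiff_subset)
    simp only [erasePart, insertPart, Finpartition.copy_parts]
    rw [Finpartition.avoid_parts_of_mem _ (by simp), Finpartition.extend_parts, erase_insert hcy]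

def eraseBlock (x : MixedConfig m s (K + 1) r) (t : Fin (K + 1)) (hx : x.blocks t = c) :
    MixedConfig m (s \ c) K r where
  blocks := t.removeNth x.blocks
  partition := x.partition.copy <| by
    rw [Fin.biUnion_univ_eq_union_removeNth t, hx]; exact sdiff_sdiff_left.symm
  blocks_subset i :=
    subset_sdiff.2 ⟨x.blocks_subset _, hx ▸ x.blocks_disjoint (t.succAbove_ne i)⟩
  blocks_nonempty i := x.blocks_nonempty _
  card_blocks_le i := x.card_blocks_le _
  blocks_disjoint i j hij := x.blocks_disjoint (Fin.succAbove_right_injective.ne hij)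
  card_parts := x.card_parts
  card_le_of_mem_parts := x.card_le_of_mem_parts

def insertBlock (y : MixedConfig m (s \ c) K r) (t : Fin (K + 1)) (hc : c.Nonempty)
    (hcm : #c ≤ m) (hcs : c ⊆ s) : MixedConfig m s (K + 1) r where
  blocks := t.insertNth c y.blocks
  partition := y.partition.copy (by rw [Fin.biUnion_univ_insertNth]; exact sdiff_sdiff_left)
  blocks_subset := (Fin.forall_insertNth_iff t (· ⊆ s)).2
    ⟨hcs, fun i => (y.blocks_subset i).trans sdiff_subset⟩
  blocks_nonempty := (Fin.forall_insertNth_iff t _).2 ⟨hc, y.blocks_nonempty⟩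
  card_blocks_le := (Fin.forall_insertNth_iff t (#· ≤ m)).2 ⟨hcm, y.card_blocks_le⟩
  blocks_disjoint := Fin.pairwise_disjoint_insertNth t
    (fun i => disjoint_sdiff.mono_right (y.blocks_subset i)) y.blocks_disjoint
  card_parts := y.card_parts
  card_le_of_mem_parts := y.card_le_of_mem_parts

def blockFiberEquiv (hc : c.Nonempty) (hcm : #c ≤ m) (hcs : c ⊆ s) (t : Fin (K + 1)) :
    {x : MixedConfig m s (K + 1) r // x.blocks t = c} ≃ MixedConfig m (s \ c) K r where
  toFun x := x.1.eraseBlock t x.2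
  invFun y := ⟨y.insertBlock t hc hcm hcs, by simp [insertBlock]⟩
  left_inv x := Subtype.ext <| MixedConfig.ext (by
    have h := Fin.insertNth_self_removeNth t x.1.blocks
    rwa [x.2] at h) rfl
  right_inv y := MixedConfig.ext (Fin.removeNth_insertNth (α := fun _ => Finset α) t c y.blocks)
    (by simp only [eraseBlock, insertBlock, Finpartition.copy_parts])

theorem sum_card_blocks_add_sum_card_parts (x : MixedConfig m s K r) :
    ∑ i, #(x.blocks i) + ∑ p ∈ x.partition.parts, #p = #s := by
  rw [x.partition.sum_card_parts, ← card_biUnion fun i _ j _ hij => x.blocks_disjoint hij,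
    add_comm, card_sdiff_add_card_eq_card (biUnion_subset.2 fun i _ => x.blocks_subset i)]

theorem card_mul_card_eq_sum [Fintype α] (s : Finset α) :
    #s * Nat.card (MixedConfig m s K r) =
      ∑ c ∈ s.powerset, #c * (Nat.card {x : MixedConfig m s K r // c ∈ x.partition.parts} +
        ∑ i, Nat.card {x : MixedConfig m s K r // x.blocks i = c}) := by
  have := Fintype.ofFinite (MixedConfig m s K r)
  have hsize (x : MixedConfig m s K r) : #s =
      ∑ c ∈ s.powerset, (if c ∈ x.partition.parts then #c else 0) +
        ∑ i, ∑ c ∈ s.powerset, if x.blocks i = c then #c else 0 := by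
    rw [← x.sum_card_blocks_add_sum_card_parts, add_comm, sum_ite_mem,
      inter_eq_right.2 fun p hp => mem_powerset.2 (x.partition.le hp |>.trans sdiff_subset)]
    simp [x.blocks_subset]
  simp only [Nat.card_eq_fintype_card, Fintype.card_subtype, mul_add, mul_sum, sum_add_distrib]
  calc #s * Fintype.card (MixedConfig m s K r)
      = ∑ x : MixedConfig m s K r, #s := by rw [sum_const, card_univ, smul_eq_mul, mul_comm]
    _ = ∑ x : MixedConfig m s K r, ∑ c ∈ s.powerset,
            (if c ∈ x.partition.parts then #c else 0) +
          ∑ i, ∑ x : MixedConfig m s K r, ∑ c ∈ s.powerset,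
            if x.blocks i = c then #c else 0 := by
      rw [sum_congr rfl fun x _ => hsize x, sum_add_distrib, sum_comm (s := univ) (t := univ)]
    _ = _ := by simp only [sum_sum_ite_eq_sum_mul_card]; rw [sum_comm]

theorem card_partFiber (hc : c.Nonempty) (hcs : c ⊆ s) :
    Nat.card {x : MixedConfig m s K (r + 1) // c ∈ x.partition.parts} =
      if #c ≤ m then mixedStirlingLe m (#s - #c) (K + 1) r else 0 := by
  split_ifs with hcm
  · rw [Nat.card_congr (partFiberEquiv hc hcm hcs), card_eq_mixedStirlingLe,
      card_sdiff_of_subset hcs]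
  · exact Nat.card_eq_zero.2 (.inl ⟨fun x => hcm (x.1.card_le_of_mem_parts c x.2)⟩)

theorem card_blockFiber (hc : c.Nonempty) (hcs : c ⊆ s) (t : Fin K) :
    Nat.card {x : MixedConfig m s K r // x.blocks t = c} =
      if #c ≤ m then mixedStirlingLe m (#s - #c) K r else 0 := by
  obtain _ | K := K
  · exact t.elim0
  split_ifs with hcm
  · rw [Nat.card_congr (blockFiberEquiv hc hcm hcs t), card_eq_mixedStirlingLe,
      card_sdiff_of_subset hcs]
  · exact Nat.card_eq_zero.2 (.inl ⟨fun x => hcm (x.2 ▸ x.1.card_blocks_le t)⟩)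

end MixedConfig

open MixedConfig in
theorem card_mul_mixedStirlingLe {α : Type*} [DecidableEq α] [Fintype α] (m : ℕ)
    (s : Finset α) (K r : ℕ) :
    #s * mixedStirlingLe m #s (K + 1) (r + 1) = ∑ j ∈ Icc 1 m, j * (#s).choose j *
      (mixedStirlingLe m (#s - j) (K + 1) r + K * mixedStirlingLe m (#s - j) K (r + 1)) := by
  rw [← card_eq_mixedStirlingLe, card_mul_card_eq_sum]
  refine sum_powerset_card_mul_eq s fun c hcs hc => ?_
  simp only [card_partFiber hc hcs, card_blockFiber hc hcs, sum_const, card_univ,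
    Fintype.card_fin, smul_eq_mul]
  split_ifs <;> simp

theorem n_mul_mixedStirlingLe_general (n k m r : ℕ)
    (hk : 1 ≤ k) (hr : 1 ≤ r) :
    n * mixedStirlingLe m n k r =
      ∑ j ∈ Finset.Icc 1 m,
        j * n.choose j *
          (mixedStirlingLe m (n - j) k (r - 1) +
            (k - 1) * mixedStirlingLe m (n - j) (k - 1) r) := by
  obtain ⟨K, rfl⟩ := Nat.exists_eq_add_of_le' hk
  obtain ⟨r, rfl⟩ := Nat.exists_eq_add_of_le' hr
  simpa using card_mul_mixedStirlingLe m (univ : Finset (Fin n)) K r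

theorem n_mul_mixedStirlingLe (n k m r : ℕ)
    (hn : 1 ≤ n) (hk : 1 ≤ k) (hm : 1 ≤ m) (hr : 1 ≤ r) :
    n * mixedStirlingLe m n k r =
      ∑ j ∈ Finset.Icc 1 m,
        j * n.choose j *
          (mixedStirlingLe m (n - j) k (r - 1) +
            (k - 1) * mixedStirlingLe m (n - j) (k - 1) r) :=
  n_mul_mixedStirlingLe_general n k m r hk hr
end
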